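/- Let S be a finite set of unit vectors in ℝ^n such that the inner products ⟨u, v⟩ for distinct u, v ∈ S take at most t distinct values b_1, …, b_t, all different from 1. For each u ∈ S define the polynomial F_u(x) := ∏_{i=1}^t (⟨u, x⟩ − b_i) on ℝ^n. Then {F_u : u ∈ S} is a linearly independent set of polynomials of degree at most t, and restricted to the sphere ‖x‖ = 1 each F_u lies in a space of dimension C(n + t − 1, n − 1) + C(n + t − 2, n − 1); hence |S| ≤ C(n + t − 1, n − 1) + C(n + t − 2, n − 1). -/

import Mathlib

/-!
Evaluating at the points of `S` shows that the functions `F_u` are linearly independent: `F_u`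
vanishes at every other point of `S` (the inner product is some `b_i`) but not at `u`, where it is
`∏ i, (1 - b_i)`. Each `F_u` is a polynomial of degree at most `t`. Since `∑ x_j ^ 2 = 1` on
the sphere, multiplying a homogeneous component of degree `d` by `(∑ x_j ^ 2) ^ k` with
`d + 2k ∈ {t, t - 1}` does not change it as a function there: every `F_u` restricts to a sum of
homogeneous polynomials of degrees `t` and `t - 1`, a space of dimension at most
`C(n + t - 1, n - 1) + C(n + t - 2, n - 1)`.
-/

open Real
open scoped RealInnerProductSpace
open MvPolynomial

theorem Nat.add_sub_one_choose_le_choose_sub_one (n d : ℕ) :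
    (n + d - 1).choose d ≤ (n + d - 1).choose (n - 1) := by
  rcases n with _ | n
  · rcases d with _ | d
    · rfl
    · simp
  · simp [Nat.choose_symm_add]

theorem linearIndependent_of_apply_ne_zero_of_apply_eq_zero {ι X K : Type*} [Field K]
    {f : ι → X → K} (x : ι → X) (hdiag : ∀ i, f i (x i) ≠ 0)
    (hoff : ∀ i j, i ≠ j → f i (x j) = 0) : LinearIndependent K f := by
  classical
  rw [linearIndependent_iff']
  intro s g hg i hi
  have hgi := congrFun hg (x i)
  rw [Finset.sum_apply, Finset.sum_eq_single_of_mem i hi fun j _ hji => by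
    simp [hoff j i hji]] at hgi
  simpa [hdiag i] using hgi

namespace MvPolynomial

instance {σ R : Type*} [Finite σ] [CommSemiring R] (d : ℕ) :
    Module.Finite R (homogeneousSubmodule σ R d) :=
  Module.Finite.iff_fg.mpr (homogeneousSubmodule_fg σ R d)

theorem finrank_homogeneousSubmodule {σ R : Type*} [Fintype σ] [CommRing R]
    [StrongRankCondition R] (d : ℕ) :
    Module.finrank R (homogeneousSubmodule σ R d) = (Fintype.card σ + d - 1).choose d := by
  classical
  have hset : {m : σ →₀ ℕ | m.degree = d} =
      ((Finset.univ : Finset σ).finsuppAntidiag d : Set (σ →₀ ℕ)) := by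
    ext m
    simp [Finsupp.degree_eq_sum]
  rw [homogeneousSubmodule_eq_finsupp_supported, hset, ← restrictSupport,
    Module.finrank_eq_nat_card_basis (basisRestrictSupport R _), Nat.card_coe_set_eq,
    Set.ncard_coe_finset, Finset.card_finsuppAntidiag_nat_eq_choose, Finset.card_univ]

theorem finrank_homogeneousSubmodule_sup_sub_one_le {K : Type*} [Field K] (n t : ℕ) :
    Module.finrank K
        ↥(homogeneousSubmodule (Fin n) K t ⊔ homogeneousSubmodule (Fin n) K (t - 1)) ≤
      (n + t - 1).choose (n - 1) + (n + t - 2).choose (n - 1) := by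
  rcases t with _ | t
  · rw [zero_tsub, sup_idem, finrank_homogeneousSubmodule, Fintype.card_fin]
    exact (Nat.add_sub_one_choose_le_choose_sub_one n 0).trans (Nat.le_add_right _ _)
  · rw [Nat.add_sub_cancel, show n + (t + 1) - 2 = n + t - 1 by omega]
    refine (Submodule.finrank_add_le_finrank_add_finrank _ _).trans ?_
    rw [finrank_homogeneousSubmodule, finrank_homogeneousSubmodule, Fintype.card_fin]
    exact add_le_add (Nat.add_sub_one_choose_le_choose_sub_one n (t + 1))
      (Nat.add_sub_one_choose_le_choose_sub_one n t)

section SumSqEqOne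

variable {σ R A : Type*} [CommSemiring R] [CommSemiring A] [Algebra R A] [Fintype σ]
  {x : σ → A}

theorem isHomogeneous_sum_X_sq : (∑ j, X j ^ 2 : MvPolynomial σ R).IsHomogeneous 2 :=
  IsHomogeneous.sum _ _ _ fun j _ => isHomogeneous_X_pow j 2

theorem aeval_mem_map_homogeneousSubmodule_sup_of_isHomogeneous (hx : ∑ j, x j ^ 2 = 1)
    {φ : MvPolynomial σ R} {d t : ℕ} (hφ : φ.IsHomogeneous d) (hdt : d ≤ t) :
    aeval x φ ∈ (homogeneousSubmodule σ R t ⊔ homogeneousSubmodule σ R (t - 1)).map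
      (aeval x).toLinearMap := by
  obtain ⟨k, hk⟩ : ∃ k, d + 2 * k = t ∨ d + 2 * k = t - 1 := ⟨(t - d) / 2, by omega⟩
  have hlift : (φ * (∑ j, X j ^ 2) ^ k).IsHomogeneous (d + 2 * k) :=
    hφ.mul (isHomogeneous_sum_X_sq.pow k)
  refine ⟨φ * (∑ j, X j ^ 2) ^ k, ?_, by simp [hx]⟩
  rcases hk with hk | hk
  · exact Submodule.mem_sup_left (hk ▸ hlift)
  · exact Submodule.mem_sup_right (hk ▸ hlift)

theorem aeval_mem_map_homogeneousSubmodule_sup (hx : ∑ j, x j ^ 2 = 1)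
    {p : MvPolynomial σ R} {t : ℕ} (hp : p.totalDegree ≤ t) :
    aeval x p ∈ (homogeneousSubmodule σ R t ⊔ homogeneousSubmodule σ R (t - 1)).map
      (aeval x).toLinearMap := by
  rw [← sum_homogeneousComponent p, map_sum]
  refine Submodule.sum_mem _ fun d hd => ?_
  exact aeval_mem_map_homogeneousSubmodule_sup_of_isHomogeneous hx
    (homogeneousComponent_isHomogeneous d p) (by grind)

end SumSqEqOne

end MvPolynomial

namespace EuclideanSpace

variable {n : ℕ}

noncomputable def innerPoly (u : EuclideanSpace ℝ (Fin n)) : MvPolynomial (Fin n) ℝ :=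
  ∑ j, C (u j) * X j

theorem eval_innerPoly (u x : EuclideanSpace ℝ (Fin n)) :
    eval (fun j => x j) (innerPoly u) = ⟪u, x⟫ := by
  simp [innerPoly, PiLp.inner_apply, mul_comm]

theorem isHomogeneous_innerPoly (u : EuclideanSpace ℝ (Fin n)) :
    (innerPoly u).IsHomogeneous 1 :=
  IsHomogeneous.sum _ _ _ fun _ _ => isHomogeneous_C_mul_X _ _

theorem exists_totalDegree_le_eval_eq_prod_inner_sub {ι : Type*} [Fintype ι]
    (u : EuclideanSpace ℝ (Fin n)) (b : ι → ℝ) :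
    ∃ p : MvPolynomial (Fin n) ℝ, p.totalDegree ≤ Fintype.card ι ∧
      ∀ x : EuclideanSpace ℝ (Fin n), eval (fun j => x j) p = ∏ i, (⟪u, x⟫ - b i) := by
  refine ⟨∏ i, (innerPoly u - C (b i)), (totalDegree_finsetProd _ _).trans ?_, fun x => ?_⟩
  · simpa using Finset.sum_le_sum fun i (_ : i ∈ Finset.univ) =>
      (totalDegree_sub_C_le (innerPoly u) (b i)).trans (isHomogeneous_innerPoly u).totalDegree_le
  · simp [eval_innerPoly]

def sphereCoord (n : ℕ) (j : Fin n) : Metric.sphere (0 : EuclideanSpace ℝ (Fin n)) 1 → ℝ :=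
  fun x => (x : EuclideanSpace ℝ (Fin n)) j

theorem sum_sphereCoord_sq : ∑ j, sphereCoord n j ^ 2 = 1 := by
  funext x
  have hx := x.2
  rw [mem_sphere_zero_iff_norm, EuclideanSpace.norm_eq, Real.sqrt_eq_one] at hx
  simpa [sphereCoord, Finset.sum_apply] using hx

theorem aeval_sphereCoord_apply (p : MvPolynomial (Fin n) ℝ)
    (x : Metric.sphere (0 : EuclideanSpace ℝ (Fin n)) 1) :
    aeval (sphereCoord n) p x = eval (fun j => (x : EuclideanSpace ℝ (Fin n)) j) p := by
  change Pi.evalAlgHom ℝ _ x (aeval _ p) = _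
  rw [← AlgHom.comp_apply, comp_aeval]
  rfl

noncomputable def sphereRestrictHomogeneous (n t : ℕ) :
    Submodule ℝ (Metric.sphere (0 : EuclideanSpace ℝ (Fin n)) 1 → ℝ) :=
  (homogeneousSubmodule (Fin n) ℝ t ⊔ homogeneousSubmodule (Fin n) ℝ (t - 1)).map
    (aeval (sphereCoord n)).toLinearMap

instance (n t : ℕ) : Module.Finite ℝ (sphereRestrictHomogeneous n t) :=
  Module.Finite.map _ _

theorem finrank_sphereRestrictHomogeneous_le (n t : ℕ) :
    Module.finrank ℝ (sphereRestrictHomogeneous n t) ≤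
      (n + t - 1).choose (n - 1) + (n + t - 2).choose (n - 1) :=
  (Submodule.finrank_map_le _ _).trans (finrank_homogeneousSubmodule_sup_sub_one_le n t)

theorem eval_mem_sphereRestrictHomogeneous {t : ℕ} {p : MvPolynomial (Fin n) ℝ}
    (hp : p.totalDegree ≤ t) :
    (fun x : Metric.sphere (0 : EuclideanSpace ℝ (Fin n)) 1 =>
      eval (fun j => (x : EuclideanSpace ℝ (Fin n)) j) p) ∈ sphereRestrictHomogeneous n t := by
  have hfun : (fun x : Metric.sphere (0 : EuclideanSpace ℝ (Fin n)) 1 =>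
      eval (fun j => (x : EuclideanSpace ℝ (Fin n)) j) p) = aeval (sphereCoord n) p :=
    funext fun x => by rw [aeval_sphereCoord_apply]
  rw [hfun]
  exact aeval_mem_map_homogeneousSubmodule_sup sum_sphereCoord_sq hp

theorem linearIndependent_prod_inner_sub {ι : Type*} [Fintype ι]
    (S : Finset (EuclideanSpace ℝ (Fin n))) (hunit : ∀ u ∈ S, ‖u‖ = 1)
    (b : ι → ℝ) (hb : ∀ i, b i ≠ 1)
    (hdist : ∀ u ∈ S, ∀ v ∈ S, u ≠ v → ∃ i, ⟪u, v⟫ = b i) :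
    LinearIndependent ℝ (fun (u : S) (x : Metric.sphere (0 : EuclideanSpace ℝ (Fin n)) 1) =>
      ∏ i, (⟪(u : EuclideanSpace ℝ (Fin n)), (x : EuclideanSpace ℝ (Fin n))⟫ - b i)) := by
  refine linearIndependent_of_apply_ne_zero_of_apply_eq_zero
    (fun u => ⟨u, mem_sphere_zero_iff_norm.2 (hunit u u.2)⟩) (fun u => ?_) (fun u v huv => ?_)
  · simp only [real_inner_self_eq_norm_sq, hunit u u.2, one_pow]
    exact Finset.prod_ne_zero_iff.2 fun i _ => sub_ne_zero.2 (hb i).symm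
  · obtain ⟨i, hi⟩ := hdist u u.2 v v.2 (Subtype.coe_ne_coe.2 huv)
    exact Finset.prod_eq_zero (Finset.mem_univ i) (by simp [hi])

end EuclideanSpace

open EuclideanSpace in
/-- the Delsarte–Goethals–Seidel bound for spherical `t`-distance sets. The
polynomials `F_u(x) = ∏_i (⟨u,x⟩ − b_i)` have degree at most `t`; their restrictions to the
unit sphere are linearly independent and lie in a space of dimension at most
`D = C(n+t−1, n−1) + C(n+t−2, n−1)`; hence `|S| ≤ D`. -/
theorem stmt14 (n t : ℕ) (S : Finset (EuclideanSpace ℝ (Fin n)))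
    (hunit : ∀ u ∈ S, ‖u‖ = 1)
    (b : Fin t → ℝ) (hb : ∀ i, b i ≠ 1)
    (hdist : ∀ u ∈ S, ∀ v ∈ S, u ≠ v → ∃ i, ⟪u, v⟫ = b i) :
    LinearIndependent ℝ (fun u : S =>
      (fun x : Metric.sphere (0 : EuclideanSpace ℝ (Fin n)) 1 =>
        ∏ i, (⟪(u : EuclideanSpace ℝ (Fin n)), (x : EuclideanSpace ℝ (Fin n))⟫ - b i))) ∧
    (∀ u ∈ S, ∃ p : MvPolynomial (Fin n) ℝ, p.totalDegree ≤ t ∧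
      ∀ x : EuclideanSpace ℝ (Fin n),
        MvPolynomial.eval (fun i => x i) p = ∏ i, (⟪u, x⟫ - b i)) ∧
    (∃ W : Submodule ℝ ((Metric.sphere (0 : EuclideanSpace ℝ (Fin n)) 1) → ℝ),
      Module.finrank ℝ W ≤ (n + t - 1).choose (n - 1) + (n + t - 2).choose (n - 1) ∧
      ∀ u ∈ S, (fun x : Metric.sphere (0 : EuclideanSpace ℝ (Fin n)) 1 =>
        ∏ i, (⟪u, (x : EuclideanSpace ℝ (Fin n))⟫ - b i)) ∈ W) ∧
    S.card ≤ (n + t - 1).choose (n - 1) + (n + t - 2).choose (n - 1) := by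
  have hpoly (u : EuclideanSpace ℝ (Fin n)) : ∃ p : MvPolynomial (Fin n) ℝ, p.totalDegree ≤ t ∧
      ∀ x : EuclideanSpace ℝ (Fin n), eval (fun j => x j) p = ∏ i, (⟪u, x⟫ - b i) := by
    simpa using exists_totalDegree_le_eval_eq_prod_inner_sub u b
  have hmem (u : EuclideanSpace ℝ (Fin n)) :
      (fun x : Metric.sphere (0 : EuclideanSpace ℝ (Fin n)) 1 =>
        ∏ i, (⟪u, (x : EuclideanSpace ℝ (Fin n))⟫ - b i)) ∈ sphereRestrictHomogeneous n t := by
    obtain ⟨p, hp, hev⟩ := hpoly u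
    simpa only [hev] using eval_mem_sphereRestrictHomogeneous hp
  have hli := linearIndependent_prod_inner_sub S hunit b hb hdist
  refine ⟨hli, fun u _ => hpoly u, ⟨_, finrank_sphereRestrictHomogeneous_le n t,
    fun u _ => hmem u⟩, ?_⟩
  calc S.card = Module.finrank ℝ (Submodule.span ℝ (Set.range _)) :=
        (Fintype.card_coe S).symm.trans (finrank_span_eq_card hli).symm
    _ ≤ Module.finrank ℝ (sphereRestrictHomogeneous n t) :=
        Submodule.finrank_mono (Submodule.span_le.2 (Set.range_subset_iff.2 fun u => hmem u))
    _ ≤ _ := finrank_sphereRestrictHomogeneous_le n t
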